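/- For every integer k ≥ 1 there exists a constant c_k > 0 such that for all real k×k matrices A and B and every Lebesgue-measurable set E ⊂ ℝ, one has ∫_E |det(tA + B)| dt ≥ c_k |E|^{k+1} |det A|. -/

import Mathlib

open scoped BigOperators ENNReal NNReal RealInnerProductSpace FourierTransform Classical
open MeasureTheory Metric Set Filter

noncomputable section

namespace OIpaper

/-- `ℝ^n` as a Euclidean space. -/
abbrev Spc (n : ℕ) : Type := EuclideanSpace ℝ (Fin n)

variable {d : ℕ}

/-- Partial derivative in the `i`-th `𝐱`-coordinate. -/
def pdx (φ : Spc (d + 1) → Spc d → ℝ) (i : Fin (d + 1)) : Spc (d + 1) → Spc d → ℝ :=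
  fun X ξ => fderiv ℝ (fun Y => φ Y ξ) X (EuclideanSpace.single i 1)

/-- Partial derivative in the `j`-th `ξ`-coordinate. -/
def pdXi (φ : Spc (d + 1) → Spc d → ℝ) (j : Fin d) : Spc (d + 1) → Spc d → ℝ :=
  fun X ξ => fderiv ℝ (fun η => φ X η) ξ (EuclideanSpace.single j 1)

/-- The vector `T_j = ∇_𝐱 ∂_{ξ_j} φ`. -/
def Tvec (φ : Spc (d + 1) → Spc d → ℝ) (j : Fin d) (X : Spc (d + 1)) (ξ : Spc d) :
    Fin (d + 1) → ℝ :=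
  fun i => pdx (pdXi φ j) i X ξ

/-- Generalized cross product of `n-1` vectors in `ℝ^n`. -/
def cross (w : Fin d → Fin (d + 1) → ℝ) : Fin (d + 1) → ℝ := fun i =>
  Matrix.det (Matrix.of (Fin.snoc w (Pi.single i (1 : ℝ))))

/-- The (non-normalized) Gauss map `G₀`. -/
def G0 (φ : Spc (d + 1) → Spc d → ℝ) (X : Spc (d + 1)) (ξ : Spc d) : Fin (d + 1) → ℝ :=
  cross fun j => Tvec φ j X ξ

/-- Hörmander's condition (H1) at a point. -/
def H1At (φ : Spc (d + 1) → Spc d → ℝ) (X : Spc (d + 1)) (ξ : Spc d) : Prop :=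
  (Matrix.of fun i j => Tvec φ j X ξ i).rank = d

/-- Hessian in the `ξ` variable of a scalar function. -/
def hessXi (f : Spc d → ℝ) (ξ : Spc d) : Matrix (Fin d) (Fin d) ℝ :=
  Matrix.of fun j k =>
    fderiv ℝ (fun η => fderiv ℝ f η (EuclideanSpace.single k 1)) ξ (EuclideanSpace.single j 1)

/-- Hörmander's condition (H2) at `(𝐱; ξ₀)`. -/
def H2At (φ : Spc (d + 1) → Spc d → ℝ) (X : Spc (d + 1)) (ξ0 : Spc d) : Prop :=
  (hessXi (fun ξ => ∑ i, pdx φ i X ξ * G0 φ X ξ0 i) ξ0).det ≠ 0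

/-- Hörmander's condition (H2⁺) at `(𝐱; ξ₀)`. -/
def H2PlusAt (φ : Spc (d + 1) → Spc d → ℝ) (X : Spc (d + 1)) (ξ0 : Spc d) : Prop :=
  (hessXi (fun ξ => ∑ i, pdx φ i X ξ * G0 φ X ξ0 i) ξ0).PosDef

/-- The first-order operator `W·∇_𝐱` applied to a scalar function `g`. -/
def VD (W : Spc (d + 1) → Spc d → Fin (d + 1) → ℝ) (g : Spc (d + 1) → Spc d → ℝ) :
    Spc (d + 1) → Spc d → ℝ :=
  fun X ξ => ∑ i, W X ξ i * pdx g i X ξ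

/-- Entry `(j,k)` of the Hessian `∇_ξ² φ`, as a function of `(𝐱; ξ)`. -/
def d2Xi (φ : Spc (d + 1) → Spc d → ℝ) (j k : Fin d) : Spc (d + 1) → Spc d → ℝ :=
  fun X ξ => hessXi (fun η => φ X η) ξ j k

/-- Bourgain's condition at `(𝐱₀; ξ₀)` with respect to a vector field `W`. -/
def BourgainWith (W : Spc (d + 1) → Spc d → Fin (d + 1) → ℝ)
    (φ : Spc (d + 1) → Spc d → ℝ) (X0 : Spc (d + 1)) (ξ0 : Spc d) : Prop :=
  ∃ c : ℝ,
    (Matrix.of fun j k => VD W (VD W (d2Xi φ j k)) X0 ξ0) =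
      c • (Matrix.of fun j k => VD W (d2Xi φ j k) X0 ξ0)

/-- Bourgain's condition at `(𝐱₀; ξ₀)`. -/
def BourgainAt (φ : Spc (d + 1) → Spc d → ℝ) (X0 : Spc (d + 1)) (ξ0 : Spc d) : Prop :=
  BourgainWith (G0 φ) φ X0 ξ0

/-- The `x`-part of a point `𝐱 = (x,t) ∈ ℝ^n`. -/
def xp (X : Spc (d + 1)) : Spc d :=
  (WithLp.equiv 2 (Fin d → ℝ)).symm fun j => X j.castSucc

/-- The `t`-part of a point `𝐱 = (x,t) ∈ ℝ^n`. -/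
def tp (X : Spc (d + 1)) : ℝ := X (Fin.last d)

/-- Assemble `(x, t)` into a point of `ℝ^n`. -/
def mk' (x : Spc d) (t : ℝ) : Spc (d + 1) :=
  (WithLp.equiv 2 (Fin (d + 1) → ℝ)).symm (Fin.snoc (WithLp.equiv 2 (Fin d → ℝ) x) t)

/-- Smoothness of the phase on `B^n × B^{n-1}`. -/
def SmoothPhase (φ : Spc (d + 1) → Spc d → ℝ) : Prop :=
  ContDiffOn ℝ (⊤ : ℕ∞) (fun p : Spc (d + 1) × Spc d => φ p.1 p.2)
    (ball 0 1 ×ˢ ball 0 1)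

/-- A smooth amplitude supported in `B^n × B^{n-1}`. -/
def SmoothAmp (a : Spc (d + 1) → Spc d → ℝ) : Prop :=
  ContDiff ℝ (⊤ : ℕ∞) (fun p : Spc (d + 1) × Spc d => a p.1 p.2) ∧
    tsupport (fun p : Spc (d + 1) × Spc d => a p.1 p.2) ⊆ ball 0 1 ×ˢ ball 0 1

/-- A smooth local diffeomorphism fixing the origin. -/
def IsLocalDiffeo0 {n : ℕ} (h : Spc n → Spc n) : Prop :=
  ContDiffAt ℝ (⊤ : ℕ∞) h 0 ∧ h 0 = 0 ∧ Function.Bijective (fderiv ℝ h 0)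

/-- The pairing `⟨x, ξ⟩` of the spatial part of `𝐱` with `ξ`. -/
def inx (X : Spc (d + 1)) (ξ : Spc d) : ℝ := ∑ j, xp X j * ξ j

/-- The quadratic form `⟨Aξ, ξ⟩`. -/
def quadA (A : Matrix (Fin d) (Fin d) ℝ) (ξ : Spc d) : ℝ := ∑ j, ∑ k, A j k * ξ j * ξ k

/-- `ψ` has the shape `⟨x,ξ⟩ + t⟨Aξ,ξ⟩ + O(|t||ξ|³ + |𝐱|²|ξ|²)` near the origin,
with `A` symmetric and non-degenerate. -/
def HasNormalShape (ψ : Spc (d + 1) → Spc d → ℝ) (A : Matrix (Fin d) (Fin d) ℝ) : Prop :=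
  A.IsSymm ∧ A.det ≠ 0 ∧
    ∃ C > 0, ∀ᶠ p : Spc (d + 1) × Spc d in nhds 0,
      |ψ p.1 p.2 - inx p.1 p.2 - tp p.1 * quadA A p.2| ≤
        C * (|tp p.1| * ‖p.2‖ ^ 3 + ‖p.1‖ ^ 2 * ‖p.2‖ ^ 2)

/-- `ψ''` is a normal form of `ψ` at the origin. -/
def IsNormalFormOf (ψ ψ'' : Spc (d + 1) → Spc d → ℝ) : Prop :=
  ∃ (h : Spc (d + 1) → Spc (d + 1)) (g : Spc d → Spc d) (ρ : Spc (d + 1) → ℝ)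
      (σ : Spc d → ℝ) (A : Matrix (Fin d) (Fin d) ℝ),
    IsLocalDiffeo0 h ∧ IsLocalDiffeo0 g ∧
      ContDiffAt ℝ (⊤ : ℕ∞) ρ 0 ∧ ContDiffAt ℝ (⊤ : ℕ∞) σ 0 ∧
      (∀ᶠ p : Spc (d + 1) × Spc d in nhds 0,
        ψ'' p.1 p.2 = ψ (h p.1) (g p.2) - ρ p.1 - σ p.2) ∧
      HasNormalShape ψ'' A

/-- The matrix `∇_ξ² ∂_t ψ (0; 0)`. -/
def NFmat1 (ψ : Spc (d + 1) → Spc d → ℝ) : Matrix (Fin d) (Fin d) ℝ :=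
  Matrix.of fun j k => pdx (d2Xi ψ j k) (Fin.last d) 0 0

/-- The matrix `∇_ξ² ∂_t² ψ (0; 0)`. -/
def NFmat2 (ψ : Spc (d + 1) → Spc d → ℝ) : Matrix (Fin d) (Fin d) ℝ :=
  Matrix.of fun j k => pdx (pdx (d2Xi ψ j k) (Fin.last d)) (Fin.last d) 0 0

/-- Bourgain's condition expressed on a normal form. -/
def NFBourgain (ψ : Spc (d + 1) → Spc d → ℝ) : Prop :=
  ∃ c : ℝ, NFmat2 ψ = c • NFmat1 ψ

/-- The Hörmander-type oscillatory integral operator `T_N`. -/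
def TN (φ a : Spc (d + 1) → Spc d → ℝ) (N : ℝ) (f : Spc d → ℂ) (X : Spc (d + 1)) : ℂ :=
  ∫ ξ in ball (0 : Spc d) 1,
    Complex.exp (Complex.I * (N : ℂ) * (φ X ξ : ℂ)) * f ξ * (a X ξ : ℂ)

/-- The rescaled operator `T^λ`. -/
def Tlam (φ a : Spc (d + 1) → Spc d → ℝ) (lam : ℝ) (f : Spc d → ℂ) (X : Spc (d + 1)) : ℂ :=
  ∫ ξ in ball (0 : Spc d) 1,
    Complex.exp (Complex.I * ((lam * φ (lam⁻¹ • X) ξ : ℝ) : ℂ)) * f ξ *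
      ((a (lam⁻¹ • X) ξ : ℝ) : ℂ)

/-- Semialgebraic sets, together with (an upper bound for) the total degree of a
description. -/
inductive SABasic (n : ℕ) : Set (Spc n) → ℕ → Prop
  | eq (P : MvPolynomial (Fin n) ℝ) :
      SABasic n {x | MvPolynomial.eval (fun i => x i) P = 0} P.totalDegree
  | pos (P : MvPolynomial (Fin n) ℝ) :
      SABasic n {x | 0 < MvPolynomial.eval (fun i => x i) P} P.totalDegree
  | union {s t : Set (Spc n)} {c₁ c₂ : ℕ} :
      SABasic n s c₁ → SABasic n t c₂ → SABasic n (s ∪ t) (c₁ + c₂)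
  | inter {s t : Set (Spc n)} {c₁ c₂ : ℕ} :
      SABasic n s c₁ → SABasic n t c₂ → SABasic n (s ∩ t) (c₁ + c₂)
  | compl {s : Set (Spc n)} {c : ℕ} : SABasic n s c → SABasic n sᶜ c

/-- `S` is semialgebraic of complexity at most `E`. -/
def SemialgOfComplexity (n : ℕ) (S : Set (Spc n)) (E : ℕ) : Prop :=
  ∃ c ≤ E, SABasic n S c

/-- The common zero set of a family of polynomials. -/
def zeroLocus {N r : ℕ} (P : Fin r → MvPolynomial (Fin N) ℝ) : Set (Spc N) :=
  {z | ∀ j, MvPolynomial.eval (fun i => z i) (P j) = 0}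

/-- The gradient of the `j`-th polynomial at `z`. -/
def gradP {N r : ℕ} (P : Fin r → MvPolynomial (Fin N) ℝ) (j : Fin r) (z : Spc N) :
    Fin N → ℝ :=
  fun i => MvPolynomial.eval (fun i' => z i') (MvPolynomial.pderiv i (P j))

/-- Witness of a transverse complete intersection of degree at most `D`:
the gradients are linearly independent (equivalently the wedge is nonzero)
at every point of the common zero set, and the product of the degrees is at most `D`. -/
def TCIWitness {N r : ℕ} (P : Fin r → MvPolynomial (Fin N) ℝ) (D : ℕ) : Prop :=
  (∀ z ∈ zeroLocus P, LinearIndependent ℝ fun j => gradP P j z) ∧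
    (∏ j, (P j).totalDegree) ≤ D

/-- The tangent space at `z` of the variety cut out by `P`. -/
def TangentSet {N r : ℕ} (P : Fin r → MvPolynomial (Fin N) ℝ) (z : Spc N) :
    Set (Spc N) :=
  {u | ∀ j, ∑ i, gradP P j z i * u i = 0}

/-- The angle between a vector `u` and the coordinate subspace `span{e_1, …, e_{m1}}`. -/
def angleToCoord {N : ℕ} (m1 : ℕ) (u : Spc N) : ℝ :=
  Real.arccos (Real.sqrt (∑ i : Fin N, if (i : ℕ) < m1 then u i ^ 2 else 0) / ‖u‖)

/-- The angle between a vector `u` and a subspace `W`. -/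
def angleToSub {N : ℕ} (u : Spc N) (W : Submodule ℝ (Spc N)) [Submodule.HasOrthogonalProjection W] : ℝ :=
  Real.arccos (‖(Submodule.orthogonalProjectionOnto W u : Spc N)‖ / ‖u‖)

end OIpaper

/-! For `det A ≠ 0`, `p(t) = det (t • A + B)` is a real polynomial of degree `k` with leading
coefficient `det A`, so `|p t| ≥ |det A| * ∏ |t - Re zᵢ|` over its complex roots `zᵢ`. Off the
intervals of radius `s` around the `Re zᵢ`, of total length at most `2 k s`, the product is at
least `s ^ k`; the choice `s = |E| / (2 (k + 1))` keeps a part of `E` of measure `|E| / (k + 1)`. -/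

open Polynomial

namespace Polynomial

theorem exists_abs_leadingCoeff_mul_prod_le_abs_eval (P : ℝ[X]) :
    ∃ xs : Multiset ℝ, xs.card = P.natDegree ∧
      ∀ t : ℝ, |P.leadingCoeff| * (xs.map fun x => |t - x|).prod ≤ |P.eval t| := by
  set Q := P.map (algebraMap ℝ ℂ)
  have hinj : Function.Injective (algebraMap ℝ ℂ) := (algebraMap ℝ ℂ).injective
  refine ⟨Q.roots.map Complex.re,
    by simp [Q, IsAlgClosed.card_roots_map_eq_natDegree_of_injective _ hinj], fun t => ?_⟩
  have hQ : ‖Q.eval (t : ℂ)‖ = |P.leadingCoeff| * (Q.roots.map fun z => ‖(t : ℂ) - z‖).prod := by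
    conv_lhs => rw [← C_leadingCoeff_mul_prod_multiset_X_sub_C (p := Q)
      IsAlgClosed.card_roots_eq_natDegree]
    simp only [eval_mul, eval_C, norm_mul, eval_multiset_prod, Multiset.map_map, Q,
      leadingCoeff_map_of_injective hinj, Complex.coe_algebraMap, Complex.norm_real,
      Real.norm_eq_abs]
    congr 1
    exact (map_multiset_prod (normHom (α := ℂ)) _).trans (by simp [Multiset.map_map, normHom])
  have hPQ : |P.eval t| = ‖Q.eval (t : ℂ)‖ := by
    rw [show (t : ℂ) = algebraMap ℝ ℂ t from rfl, eval_map_algebraMap,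
      aeval_algebraMap_apply_eq_algebraMap_eval]
    simp
  rw [hPQ, hQ, Multiset.map_map]
  gcongr
  refine Multiset.prod_map_le_prod_map₀ _ _ (fun _ _ => abs_nonneg _) fun z _ => ?_
  simpa using Complex.abs_re_le_norm ((t : ℂ) - z)

end Polynomial

namespace Matrix

variable {n R : Type*} [Fintype n] [DecidableEq n]

theorem eval_det_X_smul_add_C [CommRing R] (A B : Matrix n n R) (t : R) :
    (det ((X : R[X]) • A.map C + B.map C)).eval t = det (t • A + B) := by
  rw [eval, ← coe_eval₂RingHom, RingHom.map_det]
  congr 1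
  ext i j
  simp only [RingHom.mapMatrix_apply, map_apply, add_apply, smul_apply, smul_eq_mul,
    coe_eval₂RingHom, eval₂_add, eval₂_mul, eval₂_X, eval₂_C, RingHom.id_apply]

theorem natDegree_det_X_smul_add_C_of_det_ne_zero [CommRing R] {A : Matrix n n R}
    (B : Matrix n n R) (hA : A.det ≠ 0) :
    natDegree (det ((X : R[X]) • A.map C + B.map C)) = Fintype.card n :=
  le_antisymm (natDegree_det_X_add_C_le A B)
    (le_natDegree_of_ne_zero ((coeff_det_X_add_C_card A B).symm ▸ hA))

theorem leadingCoeff_det_X_smul_add_C_of_det_ne_zero [CommRing R] {A : Matrix n n R}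
    (B : Matrix n n R) (hA : A.det ≠ 0) :
    leadingCoeff (det ((X : R[X]) • A.map C + B.map C)) = A.det := by
  rw [leadingCoeff, natDegree_det_X_smul_add_C_of_det_ne_zero B hA, coeff_det_X_add_C_card]

theorem exists_abs_det_mul_prod_le_abs_det_smul_add {A : Matrix n n ℝ} (B : Matrix n n ℝ)
    (hA : A.det ≠ 0) :
    ∃ xs : Multiset ℝ, xs.card = Fintype.card n ∧
      ∀ t : ℝ, |A.det| * (xs.map fun x => |t - x|).prod ≤ |(t • A + B).det| := by
  obtain ⟨xs, hcard, hxs⟩ := exists_abs_leadingCoeff_mul_prod_le_abs_eval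
    (det ((X : ℝ[X]) • A.map C + B.map C))
  rw [natDegree_det_X_smul_add_C_of_det_ne_zero B hA] at hcard
  rw [leadingCoeff_det_X_smul_add_C_of_det_ne_zero B hA] at hxs
  exact ⟨xs, hcard, fun t => eval_det_X_smul_add_C A B t ▸ hxs t⟩

end Matrix

theorem Real.volume_biUnion_ball_le (xs : Multiset ℝ) (s : ℝ) :
    volume (⋃ x ∈ xs.toFinset, ball x s) ≤ ENNReal.ofReal (2 * xs.card * s) :=
  calc volume (⋃ x ∈ xs.toFinset, ball x s)
      ≤ ∑ x ∈ xs.toFinset, volume (ball x s) := measure_biUnion_finset_le _ _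
    _ = xs.toFinset.card * ENNReal.ofReal (2 * s) := by simp [Real.volume_ball]
    _ ≤ xs.card * ENNReal.ofReal (2 * s) := by gcongr; exact Multiset.toFinset_card_le xs
    _ = ENNReal.ofReal (2 * xs.card * s) := by
        rw [← ENNReal.ofReal_natCast, ← ENNReal.ofReal_mul (by positivity)]
        ring_nf

theorem pow_card_le_prod_abs_sub_of_forall_le {xs : Multiset ℝ} {s t : ℝ} (hs : 0 ≤ s)
    (h : ∀ x ∈ xs, s ≤ |t - x|) : s ^ xs.card ≤ (xs.map fun x => |t - x|).prod := by
  simpa using Multiset.prod_map_le_prod_map₀ (fun _ => s) _ (fun _ _ => hs) h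

theorem ofReal_pow_mul_sub_le_lintegral_prod_abs_sub (xs : Multiset ℝ) (E : Set ℝ) {s : ℝ}
    (hs : 0 ≤ s) :
    ENNReal.ofReal (s ^ xs.card) * (volume E - ENNReal.ofReal (2 * xs.card * s)) ≤
      ∫⁻ t in E, ENNReal.ofReal (xs.map fun x => |t - x|).prod := by
  set U := ⋃ x ∈ xs.toFinset, ball x s
  have hfar : ∀ t ∈ E \ U, ENNReal.ofReal (s ^ xs.card) ≤
      ENNReal.ofReal (xs.map fun x => |t - x|).prod := by
    rintro t ⟨-, htU⟩
    refine ENNReal.ofReal_le_ofReal (pow_card_le_prod_abs_sub_of_forall_le hs fun x hx => ?_)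
    by_contra! hlt
    exact htU (mem_biUnion (Multiset.mem_toFinset.mpr hx) (by rwa [mem_ball, Real.dist_eq]))
  have hmeas : Measurable fun t : ℝ => ENNReal.ofReal (xs.map fun x => |t - x|).prod :=
    (continuous_multiset_prod _ fun x _ => by fun_prop).measurable.ennreal_ofReal
  calc ENNReal.ofReal (s ^ xs.card) * (volume E - ENNReal.ofReal (2 * xs.card * s))
      ≤ ENNReal.ofReal (s ^ xs.card) * volume (E \ U) := by
        gcongr
        exact (tsub_le_tsub_left (Real.volume_biUnion_ball_le xs s) _).trans le_measure_sdiff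
    _ = ∫⁻ _ in E \ U, ENNReal.ofReal (s ^ xs.card) := (setLIntegral_const _ _).symm
    _ ≤ ∫⁻ t in E \ U, ENNReal.ofReal (xs.map fun x => |t - x|).prod :=
        setLIntegral_mono hmeas hfar
    _ ≤ ∫⁻ t in E, ENNReal.ofReal (xs.map fun x => |t - x|).prod :=
        lintegral_mono_set sdiff_subset

theorem ofReal_mul_volume_pow_le_lintegral_prod_abs_sub (xs : Multiset ℝ) (E : Set ℝ) :
    ENNReal.ofReal (2 ^ xs.card * (xs.card + 1) ^ (xs.card + 1) : ℝ)⁻¹ *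
        volume E ^ (xs.card + 1) ≤
      ∫⁻ t in E, ENNReal.ofReal (xs.map fun x => |t - x|).prod := by
  rcases (le_top : volume E ≤ ∞).eq_or_lt with hE | hE
  · have h := ofReal_pow_mul_sub_le_lintegral_prod_abs_sub xs E zero_le_one
    rw [hE, ENNReal.top_sub ENNReal.ofReal_ne_top, one_pow, ENNReal.ofReal_one, one_mul] at h
    exact le_top.trans h
  obtain ⟨m, hm, hmE⟩ : ∃ m : ℝ, 0 ≤ m ∧ volume E = ENNReal.ofReal m :=
    ⟨_, ENNReal.toReal_nonneg, (ENNReal.ofReal_toReal hE.ne).symm⟩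
  have hs : 0 ≤ m / (2 * (xs.card + 1)) := by positivity
  convert ofReal_pow_mul_sub_le_lintegral_prod_abs_sub xs E hs using 1
  rw [hmE, ← ENNReal.ofReal_pow hm, ← ENNReal.ofReal_mul (by positivity),
    ← ENNReal.ofReal_sub _ (by positivity), ← ENNReal.ofReal_mul (by positivity)]
  congr 1
  rw [div_pow, mul_pow]
  field_simp
  ring

namespace OIpaper

theorem det_average_lower_bound_general (k : ℕ) :
    ∃ c : ℝ, 0 < c ∧ ∀ (A B : Matrix (Fin k) (Fin k) ℝ) (E : Set ℝ), MeasurableSet E →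
      ENNReal.ofReal (c * |A.det|) * volume E ^ (k + 1) ≤
        ∫⁻ t in E, ENNReal.ofReal |(t • A + B).det| := by
  set c : ℝ := (2 ^ k * (k + 1) ^ (k + 1))⁻¹
  refine ⟨c, by positivity, fun A B E _ => ?_⟩
  rcases eq_or_ne A.det 0 with hA | hA
  · simp [hA]
  obtain ⟨xs, hcard, hxs⟩ := A.exists_abs_det_mul_prod_le_abs_det_smul_add B hA
  rw [Fintype.card_fin] at hcard
  have hprod := ofReal_mul_volume_pow_le_lintegral_prod_abs_sub xs E
  rw [hcard] at hprod
  calc ENNReal.ofReal (c * |A.det|) * volume E ^ (k + 1)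
      = ENNReal.ofReal |A.det| * (ENNReal.ofReal c * volume E ^ (k + 1)) := by
        rw [ENNReal.ofReal_mul (by positivity)]; ring
    _ ≤ ENNReal.ofReal |A.det| * ∫⁻ t in E, ENNReal.ofReal (xs.map fun x => |t - x|).prod := by
        gcongr
    _ = ∫⁻ t in E, ENNReal.ofReal (|A.det| * (xs.map fun x => |t - x|).prod) := by
        rw [← lintegral_const_mul' _ _ ENNReal.ofReal_ne_top]
        simp_rw [ENNReal.ofReal_mul (abs_nonneg A.det)]
    _ ≤ ∫⁻ t in E, ENNReal.ofReal |(t • A + B).det| :=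
        lintegral_mono fun t => ENNReal.ofReal_le_ofReal (hxs t)

/-- for all real `k×k` matrices `A`, `B` and every measurable `E ⊆ ℝ`,
`∫_E |det(tA+B)| dt ≥ c_k |E|^{k+1} |det A|`. -/
theorem det_average_lower_bound (k : ℕ) (hk : 1 ≤ k) :
    ∃ c : ℝ, 0 < c ∧ ∀ (A B : Matrix (Fin k) (Fin k) ℝ) (E : Set ℝ), MeasurableSet E →
      ENNReal.ofReal (c * |A.det|) * volume E ^ (k + 1) ≤
        ∫⁻ t in E, ENNReal.ofReal |(t • A + B).det| :=
  det_average_lower_bound_general k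

end OIpaper
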